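/- arXiv:1711.08771 — 9 statements merged into one kernel-verified Lean document; each statement's English description precedes it below -/
import Mathlib

section
/- Let K be a field and let C₀, C₁ be K-algebras (K-vector spaces with a K-bilinear multiplication), with K-algebra homomorphisms s, t : C₁ → C₀ and e : C₀ → C₁ satisfying s ∘ e = id and t ∘ e = id. Suppose k assigns to every composable pair (x, y) ∈ C₁ × C₁ with t(x) = s(y) an element k(x,y) ∈ C₁ such that: k(x + x', y + y') = k(x,y) + k(x',y') whenever both pairs are composable, k(e(s(y)), y) = y for all y ∈ C₁, and k(x, e(t(x))) = x for all x ∈ C₁. Then for every composable pair (x, y) one has k(x, y) = x − e(t(x)) + y = x − e(s(y)) + y. -/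
/-- In a categorical `K`-algebra, the composition of a composable pair
`(x, y)` (with `t x = s y`) is given by `k x y = x - e (t x) + y = x - e (s y) + y`. -/
theorem stmt_1 (K : Type*) [Field K] (C₀ C₁ : Type*)
    [NonUnitalNonAssocRing C₀] [Module K C₀] [SMulCommClass K C₀ C₀] [IsScalarTower K C₀ C₀]
    [NonUnitalNonAssocRing C₁] [Module K C₁] [SMulCommClass K C₁ C₁] [IsScalarTower K C₁ C₁]
    (s t : C₁ →ₙₐ[K] C₀) (e : C₀ →ₙₐ[K] C₁)
    (hse : ∀ a, s (e a) = a) (hte : ∀ a, t (e a) = a)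
    (k : C₁ → C₁ → C₁)
    (hk_add : ∀ x x' y y', t x = s y → t x' = s y' →
      k (x + x') (y + y') = k x y + k x' y')
    (hk_left : ∀ y : C₁, k (e (s y)) y = y)
    (hk_right : ∀ x : C₁, k x (e (t x)) = x) :
    ∀ x y : C₁, t x = s y →
      k x y = x - e (t x) + y ∧ k x y = x - e (s y) + y := by
  intro x y hxy
  set a := x - e (t x) with ha
  set b := y - e (s y) with hb
  have hta : t a = 0 := by simp [ha, hte]
  have hsb : s b = 0 := by simp [hb, hse]
  have h1 : k a 0 = a := by
    have := hk_right a
    rwa [hta, map_zero] at this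
  have h2 : k 0 b = b := by
    have := hk_left b
    rwa [hsb, map_zero] at this
  have hab : k a b = a + b := by
    have := hk_add a 0 0 b (by simp [hta]) (by simp [hsb])
    simpa [h1, h2] using this
  have hee : k (e (t x)) (e (s y)) = e (t x) := by
    have := hk_left (e (t x))
    rw [hse] at this
    rw [hxy] at this ⊢
    exact this
  have key : k x y = a + b + e (t x) := by
    have := hk_add a (e (t x)) b (e (s y)) (by rw [hta, hsb]) (by rw [hte, hse, hxy])
    rw [hab, hee] at this
    have hx : a + e (t x) = x := by simp [ha]
    have hy : b + e (s y) = y := by simp [hb]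
    rw [hx, hy] at this
    exact this
  constructor
  · rw [key, ha, hb, hxy]; abel
  · rw [key, ha, hb, hxy]; abel
end

section
/- Let K be a field, let M and N be associative K-algebras, and let (*₁, *₂) be an associative action of N on M. Then the K-bilinear map [−,−]_* : N × M → M defined by [n, m]_* = n *₁ m − m *₂ n is a Lie action of the Lie algebra N^L on the Lie algebra M^L, i.e., for all n, n' ∈ N and m, m' ∈ M: (ALie1) [nn' − n'n, m]_* = [n, [n', m]_*]_* − [n', [n, m]_*]_*, and (ALie2) [n, mm' − m'm]_* = [[n, m]_*, m'] + [m, [n, m']_*], where [x, y] = xy − yx denotes the commutator in M. -/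
/-- An associative action `(*₁, *₂)` of `N` on `M` induces a Lie action
`[n, m]_* = n *₁ m - m *₂ n` of `N^L` on `M^L`. -/
theorem stmt_4 (K : Type*) [Field K] (M N : Type*)
    [NonUnitalRing M] [Module K M] [SMulCommClass K M M] [IsScalarTower K M M]
    [NonUnitalRing N] [Module K N] [SMulCommClass K N N] [IsScalarTower K N N]
    (act1 : N →ₗ[K] M →ₗ[K] M) (act2 : M →ₗ[K] N →ₗ[K] M)
    (hAAs1 : ∀ (n : N) (m m' : M), act1 n (m * m') = act1 n m * m')
    (hAAs2 : ∀ (n n' : N) (m : M), act1 n (act2 m n') = act2 (act1 n m) n')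
    (hAAs3 : ∀ (n n' : N) (m : M), act1 n (act1 n' m) = act1 (n * n') m)
    (hAAs4 : ∀ (n n' : N) (m : M), act2 m (n * n') = act2 (act2 m n) n')
    (hAAs5 : ∀ (n : N) (m m' : M), m * act1 n m' = act2 m n * m')
    (hAAs6 : ∀ (n : N) (m m' : M), m * act2 m' n = act2 (m * m') n) :
    -- (ALie1): [[n,n'], m]_* = [n, [n',m]_*]_* - [n', [n,m]_*]_*
    (∀ (n n' : N) (m : M),
      act1 (n * n' - n' * n) m - act2 m (n * n' - n' * n) =
        (act1 n (act1 n' m - act2 m n') - act2 (act1 n' m - act2 m n') n) -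
        (act1 n' (act1 n m - act2 m n) - act2 (act1 n m - act2 m n) n')) ∧
    -- (ALie2): [n, [m,m']]_* = [[n,m]_*, m'] + [m, [n,m']_*]
    (∀ (n : N) (m m' : M),
      act1 n (m * m' - m' * m) - act2 (m * m' - m' * m) n =
        ((act1 n m - act2 m n) * m' - m' * (act1 n m - act2 m n)) +
        (m * (act1 n m' - act2 m' n) - (act1 n m' - act2 m' n) * m)) := by
  constructor
  · intro n n' m
    simp only [map_sub, LinearMap.sub_apply, hAAs2, hAAs3, hAAs4]
    abel
  · intro n m m'
    simp only [map_sub, LinearMap.sub_apply, hAAs1, hAAs6, sub_mul, mul_sub, hAAs5]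
    abel
end

section
/- Let K be a field and let (M, N, (*₁, *₂), ∂, {−,−}) be a braided crossed module of associative K-algebras. Let M ⋊ N be the semidirect product algebra with product (m,n)(m',n') = (mm' + n *₁ m' + m *₂ n', nn'), and define s̄(m,n) = n, t̄(m,n) = ∂(m) + n, ē(n) = (0, n), and τ̄ : N × N → M ⋊ N by τ̄_{n,n'} = (−{n,n'}, nn'). Then τ̄ is a braiding on the categorical associative K-algebra determined by this data; explicitly: (i) s̄(τ̄_{n,n'}) = nn' and t̄(τ̄_{n,n'}) = n'n for all n, n' ∈ N; (ii) for all x = (m,n), y = (m',n') ∈ M ⋊ N: xy − ē(t̄(xy)) + τ̄_{t̄(x), t̄(y)} = τ̄_{s̄(x), s̄(y)} − ē(s̄(y)s̄(x)) + yx; (iii) τ̄_{nn', n''} = ē(n)τ̄_{n',n''} − ē(n(n''n')) + τ̄_{n,n''}ē(n') for all n, n', n'' ∈ N; (iv) τ̄_{n, n'n''} = τ̄_{n,n'}ē(n'') − ē((n'n)n'') + ē(n')τ̄_{n,n''} for all n, n', n'' ∈ N. -/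
/-- The semidirect product multiplication on `M × N` determined by an
associative action `(act1, act2)` of `N` on `M`:
`(m, n)(m', n') = (mm' + n *₁ m' + m *₂ n', nn')`. -/
def sdMul {M N : Type*} [Mul M] [Add M] [Mul N]
    (act1 : N → M → M) (act2 : M → N → M) (x y : M × N) : M × N :=
  (x.1 * y.1 + act1 x.2 y.1 + act2 x.1 y.2, x.2 * y.2)

/-- The source map `s̄(m, n) = n` of the categorical algebra built from a crossed module. -/
def sBar {M N : Type*} (p : M × N) : N := p.2

/-- The target map `t̄(m, n) = ∂ m + n`. -/
def tBar {M N : Type*} [Add N] (d : M → N) (p : M × N) : N := d p.1 + p.2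

/-- The identity-assigning map `ē(n) = (0, n)`. -/
def eBar {M N : Type*} [Zero M] (n : N) : M × N := ((0 : M), n)

/-- The braiding `τ̄_{n,n'} = (−{n,n'}, nn')`. -/
def tauBar {M N : Type*} [Neg M] [Mul N] (br : N → N → M) (n n' : N) : M × N :=
  (-(br n n'), n * n')

/-- if `(M, N, (*₁,*₂), ∂, {−,−})` is a braided crossed module of associative
`K`-algebras, then `τ̄_{n,n'} = (−{n,n'}, nn')` is a braiding on the categorical associative
`K`-algebra `(M ⋊ N, N, s̄, t̄, ē, k̄)`. -/
theorem stmt_7 (K : Type*) [Field K] (M N : Type*)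
    [NonUnitalRing M] [Module K M] [SMulCommClass K M M] [IsScalarTower K M M]
    [NonUnitalRing N] [Module K N] [SMulCommClass K N N] [IsScalarTower K N N]
    (act1 : N →ₗ[K] M →ₗ[K] M) (act2 : M →ₗ[K] N →ₗ[K] M)
    (hAAs1 : ∀ (n : N) (m m' : M), act1 n (m * m') = act1 n m * m')
    (hAAs2 : ∀ (n n' : N) (m : M), act1 n (act2 m n') = act2 (act1 n m) n')
    (hAAs3 : ∀ (n n' : N) (m : M), act1 n (act1 n' m) = act1 (n * n') m)
    (hAAs4 : ∀ (n n' : N) (m : M), act2 m (n * n') = act2 (act2 m n) n')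
    (hAAs5 : ∀ (n : N) (m m' : M), m * act1 n m' = act2 m n * m')
    (hAAs6 : ∀ (n : N) (m m' : M), m * act2 m' n = act2 (m * m') n)
    (d : M →ₙₐ[K] N)
    (hXAs1a : ∀ (n : N) (m : M), d (act1 n m) = n * d m)
    (hXAs1b : ∀ (n : N) (m : M), d (act2 m n) = d m * n)
    (hXAs2a : ∀ m m' : M, act1 (d m) m' = m * m')
    (hXAs2b : ∀ m m' : M, act2 m (d m') = m * m')
    (br : N →ₗ[K] N →ₗ[K] M)
    (hBAs1 : ∀ n n' : N, d (br n n') = n * n' - n' * n)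
    (hBAs2 : ∀ m m' : M, br (d m) (d m') = m * m' - m' * m)
    (hBAs3 : ∀ (m : M) (n : N), br (d m) n = -(act1 n m - act2 m n))
    (hBAs4 : ∀ (m : M) (n : N), br n (d m) = act1 n m - act2 m n)
    (hBAs5 : ∀ n n' n'' : N, br n (n' * n'') = act1 n' (br n n'') + act2 (br n n') n'')
    (hBAs6 : ∀ n n' n'' : N, br (n * n') n'' = act1 n (br n' n'') + act2 (br n n'') n') :
    -- (i): s̄(τ̄_{n,n'}) = nn' and t̄(τ̄_{n,n'}) = n'n
    (∀ n n' : N,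
      sBar (tauBar (fun a b => br a b) n n') = n * n' ∧
      tBar (fun m => d m) (tauBar (fun a b => br a b) n n') = n' * n) ∧
    -- (ii): naturality, xy − ē(t̄(xy)) + τ̄_{t̄(x),t̄(y)} = τ̄_{s̄(x),s̄(y)} − ē(s̄(y)s̄(x)) + yx
    (∀ x y : M × N,
      sdMul (fun n m => act1 n m) (fun m n => act2 m n) x y
        - eBar (tBar (fun m => d m)
            (sdMul (fun n m => act1 n m) (fun m n => act2 m n) x y))
        + tauBar (fun a b => br a b) (tBar (fun m => d m) x) (tBar (fun m => d m) y)
      = tauBar (fun a b => br a b) (sBar x) (sBar y)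
        - eBar (sBar y * sBar x)
        + sdMul (fun n m => act1 n m) (fun m n => act2 m n) y x) ∧
    -- (iii): τ̄_{nn',n''} = ē(n)τ̄_{n',n''} − ē(n(n''n')) + τ̄_{n,n''}ē(n')
    (∀ n n' n'' : N,
      tauBar (fun a b => br a b) (n * n') n''
      = sdMul (fun a m => act1 a m) (fun m a => act2 m a) (eBar n)
          (tauBar (fun a b => br a b) n' n'')
        - eBar (n * (n'' * n'))
        + sdMul (fun a m => act1 a m) (fun m a => act2 m a)
            (tauBar (fun a b => br a b) n n'') (eBar n')) ∧
    -- (iv): τ̄_{n,n'n''} = τ̄_{n,n'}ē(n'') − ē((n'n)n'') + ē(n')τ̄_{n,n''}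
    (∀ n n' n'' : N,
      tauBar (fun a b => br a b) n (n' * n'')
      = sdMul (fun a m => act1 a m) (fun m a => act2 m a)
          (tauBar (fun a b => br a b) n n') (eBar n'')
        - eBar ((n' * n) * n'')
        + sdMul (fun a m => act1 a m) (fun m a => act2 m a) (eBar n')
            (tauBar (fun a b => br a b) n n'')) := by

  refine ⟨fun n n' => ⟨rfl, ?_⟩, fun x y => ?_, fun n n' n'' => ?_, fun n n' n'' => ?_⟩
  · simp only [tauBar, tBar, map_neg, hBAs1]
    abel
  · obtain ⟨m, n⟩ := x
    obtain ⟨m', n'⟩ := y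
    have h2 : ∀ a b : M, br (d a + n) (d b + n')
        = (a * b - b * a) + (-(act1 n' a - act2 a n')) + (act1 n b - act2 b n)
          + br n n' := by
      intro a b
      simp [map_add, LinearMap.add_apply, hBAs2, hBAs3, hBAs4]
      abel
    refine Prod.ext ?_ ?_
    · simp only [sdMul, eBar, tBar, tauBar, sBar, Prod.fst_sub, Prod.fst_add, h2]
      abel
    · simp only [sdMul, eBar, tBar, tauBar, sBar, Prod.snd_sub, Prod.snd_add,
        map_add, map_mul, hXAs1a, hXAs1b]
      noncomm_ring
  · refine Prod.ext ?_ ?_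
    · simp only [tauBar, sdMul, eBar, Prod.fst_sub, Prod.fst_add, hBAs6, map_neg,
        LinearMap.neg_apply, map_zero, LinearMap.zero_apply, zero_mul, mul_zero]
      abel
    · simp only [tauBar, sdMul, eBar, Prod.snd_sub, Prod.snd_add]
      noncomm_ring
  · refine Prod.ext ?_ ?_
    · simp only [tauBar, sdMul, eBar, Prod.fst_sub, Prod.fst_add, hBAs5, map_neg,
        LinearMap.neg_apply, map_zero, LinearMap.zero_apply, zero_mul, mul_zero]
      abel
    · simp only [tauBar, sdMul, eBar, Prod.snd_sub, Prod.snd_add]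
      noncomm_ring
end

section
/- Let K be a field, let C₀, C₁ be associative K-algebras, with K-algebra homomorphisms s, t : C₁ → C₀ and e : C₀ → C₁ satisfying s ∘ e = id and t ∘ e = id, and let τ : C₀ × C₀ → C₁ be a K-bilinear map satisfying the naturality condition: for all x, y ∈ C₁, xy − e(t(x)t(y)) + τ_{t(x), t(y)} = τ_{s(x), s(y)} − e(s(y)s(x)) + yx. Then for all x ∈ ker(s) and all y ∈ C₁ one has e(t(x)t(y)) − τ_{t(x), t(y)} = xy − yx, and likewise e(t(y)t(x)) − τ_{t(y), t(x)} = yx − xy. -/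
/-- In a braided categorical associative `K`-algebra, for `x ∈ ker s` and
`y ∈ C₁` one has `e(t(x)t(y)) − τ_{t(x),t(y)} = xy − yx` and
`e(t(y)t(x)) − τ_{t(y),t(x)} = yx − xy`. -/
theorem stmt_8 (K : Type*) [Field K] (C₀ C₁ : Type*)
    [NonUnitalRing C₀] [Module K C₀] [SMulCommClass K C₀ C₀] [IsScalarTower K C₀ C₀]
    [NonUnitalRing C₁] [Module K C₁] [SMulCommClass K C₁ C₁] [IsScalarTower K C₁ C₁]
    (s t : C₁ →ₙₐ[K] C₀) (e : C₀ →ₙₐ[K] C₁)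
    (hse : ∀ a, s (e a) = a) (hte : ∀ a, t (e a) = a)
    (τ : C₀ →ₗ[K] C₀ →ₗ[K] C₁)
    (hnat : ∀ x y : C₁,
      x * y - e (t x * t y) + τ (t x) (t y) =
        τ (s x) (s y) - e (s y * s x) + y * x) :
    ∀ x y : C₁, s x = 0 →
      e (t x * t y) - τ (t x) (t y) = x * y - y * x ∧
      e (t y * t x) - τ (t y) (t x) = y * x - x * y := by
  intro x y hx
  have h1 := hnat x y
  have h2 := hnat y x
  rw [hx] at h1 h2
  simp only [map_zero, LinearMap.zero_apply, mul_zero, zero_mul,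
    LinearMap.map_zero] at h1 h2
  constructor
  · linear_combination (norm := noncomm_ring) -h1
  · linear_combination (norm := noncomm_ring) -h2
end

section
/- Let K be a field, let C₀, C₁ be associative K-algebras, with K-algebra homomorphisms s, t : C₁ → C₀ and e : C₀ → C₁ satisfying s ∘ e = id and t ∘ e = id, and let τ : C₀ × C₀ → C₁ be a K-bilinear map satisfying: (AsT1) s(τ_{a,b}) = ab and t(τ_{a,b}) = ba; (AsT2) xy − e(t(x)t(y)) + τ_{t(x),t(y)} = τ_{s(x),s(y)} − e(s(y)s(x)) + yx for all x, y ∈ C₁; (AsT3) τ_{ab,c} = e(a)τ_{b,c} − e(a(cb)) + τ_{a,c}e(b); (AsT4) τ_{a,bc} = τ_{a,b}e(c) − e((ba)c) + e(b)τ_{a,c}. Define {a, b}_τ := e(ab) − τ_{a,b}. Then {−,−}_τ is a braiding on the crossed module (ker(s), C₀, ∂_t), namely: {a,b}_τ ∈ ker(s) for all a, b ∈ C₀; (BAs1) t({a,b}_τ) = ab − ba; (BAs2) {t(x), t(y)}_τ = xy − yx for all x, y ∈ ker(s); (BAs3) {t(x), a}_τ = x e(a) − e(a) x for x ∈ ker(s),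 a ∈ C₀; (BAs4) {a, t(x)}_τ = e(a) x − x e(a) for x ∈ ker(s), a ∈ C₀; (BAs5) {a, bc}_τ = e(b){a,c}_τ + {a,b}_τ e(c); (BAs6) {ab, c}_τ = e(a){b,c}_τ + {a,c}_τ e(b). -/
/-- In a braided categorical associative `K`-algebra, the map
`{a, b}_τ := e(ab) − τ_{a,b}` is a braiding on the crossed module `(ker s, C₀, ∂_t)`. -/
theorem stmt_9 (K : Type*) [Field K] (C₀ C₁ : Type*)
    [NonUnitalRing C₀] [Module K C₀] [SMulCommClass K C₀ C₀] [IsScalarTower K C₀ C₀]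
    [NonUnitalRing C₁] [Module K C₁] [SMulCommClass K C₁ C₁] [IsScalarTower K C₁ C₁]
    (s t : C₁ →ₙₐ[K] C₀) (e : C₀ →ₙₐ[K] C₁)
    (hse : ∀ a, s (e a) = a) (hte : ∀ a, t (e a) = a)
    (τ : C₀ →ₗ[K] C₀ →ₗ[K] C₁)
    (hT1s : ∀ a b : C₀, s (τ a b) = a * b)
    (hT1t : ∀ a b : C₀, t (τ a b) = b * a)
    (hT2 : ∀ x y : C₁,
      x * y - e (t x * t y) + τ (t x) (t y) =
        τ (s x) (s y) - e (s y * s x) + y * x)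
    (hT3 : ∀ a b c : C₀,
      τ (a * b) c = e a * τ b c - e (a * (c * b)) + τ a c * e b)
    (hT4 : ∀ a b c : C₀,
      τ a (b * c) = τ a b * e c - e ((b * a) * c) + e b * τ a c) :
    -- {a,b}_τ lands in ker s
    (∀ a b : C₀, s (e (a * b) - τ a b) = 0) ∧
    -- (BAs1): t {a,b}_τ = ab − ba
    (∀ a b : C₀, t (e (a * b) - τ a b) = a * b - b * a) ∧
    -- (BAs2): {t x, t y}_τ = xy − yx for x, y ∈ ker s
    (∀ x y : C₁, s x = 0 → s y = 0 →
      e (t x * t y) - τ (t x) (t y) = x * y - y * x) ∧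
    -- (BAs3): {t x, a}_τ = x·e(a) − e(a)·x for x ∈ ker s
    (∀ (x : C₁) (a : C₀), s x = 0 →
      e (t x * a) - τ (t x) a = x * e a - e a * x) ∧
    -- (BAs4): {a, t x}_τ = e(a)·x − x·e(a) for x ∈ ker s
    (∀ (x : C₁) (a : C₀), s x = 0 →
      e (a * t x) - τ a (t x) = e a * x - x * e a) ∧
    -- (BAs5): {a, bc}_τ = e(b){a,c}_τ + {a,b}_τ e(c)
    (∀ a b c : C₀,
      e (a * (b * c)) - τ a (b * c) =
        e b * (e (a * c) - τ a c) + (e (a * b) - τ a b) * e c) ∧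
    -- (BAs6): {ab, c}_τ = e(a){b,c}_τ + {a,c}_τ e(b)
    (∀ a b c : C₀,
      e ((a * b) * c) - τ (a * b) c =
        e a * (e (b * c) - τ b c) + (e (a * c) - τ a c) * e b) := by
  refine ⟨?_, ?_, ?_, ?_, ?_, ?_, ?_⟩
  · intro a b
    simp [map_sub, hse, hT1s]
  · intro a b
    simp [map_sub, hte, hT1t]
  · intro x y hx hy
    have h := hT2 x y
    rw [hx, hy] at h
    simp only [map_zero, LinearMap.zero_apply, mul_zero, map_zero, zero_sub, neg_zero,
      zero_add] at h
    linear_combination (norm := noncomm_ring) -h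
  · intro x a hx
    have h := hT2 x (e a)
    rw [hx, hse, hte] at h
    simp only [map_zero, LinearMap.zero_apply, mul_zero, map_zero] at h
    linear_combination (norm := noncomm_ring) -h
  · intro x a hx
    have h := hT2 (e a) x
    rw [hx, hse, hte] at h
    simp only [map_zero, mul_zero, zero_mul] at h
    linear_combination (norm := noncomm_ring) -h
  · intro a b c
    have h := hT4 a b c
    have e1 : e (a * (b * c)) = e a * e b * e c := by simp [map_mul, mul_assoc]
    have e2 : e ((b * a) * c) = e b * e a * e c := by simp [map_mul]
    have e3 : e (a * c) = e a * e c := by simp [map_mul]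
    have e4 : e (a * b) = e a * e b := by simp [map_mul]
    rw [h, e1, e2, e3, e4]; noncomm_ring
  · intro a b c
    have h := hT3 a b c
    have e1 : e ((a * b) * c) = e a * e b * e c := by simp [map_mul]
    have e2 : e (a * (c * b)) = e a * (e c * e b) := by simp [map_mul]
    have e3 : e (a * c) = e a * e c := by simp [map_mul]
    have e4 : e (b * c) = e b * e c := by simp [map_mul]
    rw [h, e1, e2, e3, e4]; noncomm_ring
end

section
/- Let K be a field, let C₀, C₁ be associative K-algebras, with K-algebra homomorphisms s, t : C₁ → C₀ and e : C₀ → C₁ satisfying s ∘ e = id and t ∘ e = id, and let τ : C₀ × C₀ → C₁ be a K-bilinear map satisfying: (AsT1) s(τ_{a,b}) = ab and t(τ_{a,b}) = ba; (AsT2) xy − e(t(x)t(y)) + τ_{t(x),t(y)} = τ_{s(x),s(y)} − e(s(y)s(x)) + yx for all x, y ∈ C₁; (AsT3) τ_{ab,c} = e(a)τ_{b,c} − e(a(cb)) + τ_{a,c}e(b); (AsT4) τ_{a,bc} = τ_{a,b}e(c) − e((ba)c) + e(b)τ_{a,c}. Define τ^Lie_{a,b} := τ_{a,b} − τ_{b,a}.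 Then τ^Lie is a braiding on the categorical Lie K-algebra (C₁^L, C₀^L, s, t, e), i.e., writing [u,v] = uv − vu: (LieT1) s(τ^Lie_{a,b}) = [a,b] and t(τ^Lie_{a,b}) = [b,a]; (LieT2) [x,y] − e([t(x),t(y)]) + τ^Lie_{t(x),t(y)} = τ^Lie_{s(x),s(y)} − e([s(y),s(x)]) + [y,x] for all x, y ∈ C₁; (LieB3) τ^Lie_{[a,b],c} = [τ^Lie_{a,c}, e(b)] + [e(a), τ^Lie_{b,c}]; (LieB4) τ^Lie_{a,[b,c]} = [e(b), τ^Lie_{a,c}] + [τ^Lie_{a,b}, e(c)]. -/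
/-- If `(C₁, C₀, s, t, e, k, τ)` is a braided categorical associative
`K`-algebra, then `τ^Lie_{a,b} := τ_{a,b} − τ_{b,a}` is a braiding on the categorical Lie
`K`-algebra `(C₁^L, C₀^L, s, t, e, k)` (brackets are commutators `[u,v] = uv − vu`). -/
theorem stmt_10 (K : Type*) [Field K] (C₀ C₁ : Type*)
    [NonUnitalRing C₀] [Module K C₀] [SMulCommClass K C₀ C₀] [IsScalarTower K C₀ C₀]
    [NonUnitalRing C₁] [Module K C₁] [SMulCommClass K C₁ C₁] [IsScalarTower K C₁ C₁]
    (s t : C₁ →ₙₐ[K] C₀) (e : C₀ →ₙₐ[K] C₁)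
    (hse : ∀ a, s (e a) = a) (hte : ∀ a, t (e a) = a)
    (τ : C₀ →ₗ[K] C₀ →ₗ[K] C₁)
    (hT1s : ∀ a b : C₀, s (τ a b) = a * b)
    (hT1t : ∀ a b : C₀, t (τ a b) = b * a)
    (hT2 : ∀ x y : C₁,
      x * y - e (t x * t y) + τ (t x) (t y) =
        τ (s x) (s y) - e (s y * s x) + y * x)
    (hT3 : ∀ a b c : C₀,
      τ (a * b) c = e a * τ b c - e (a * (c * b)) + τ a c * e b)
    (hT4 : ∀ a b c : C₀,
      τ a (b * c) = τ a b * e c - e ((b * a) * c) + e b * τ a c) :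
    -- (LieT1): s(τ^Lie_{a,b}) = [a,b] and t(τ^Lie_{a,b}) = [b,a]
    (∀ a b : C₀, s (τ a b - τ b a) = a * b - b * a) ∧
    (∀ a b : C₀, t (τ a b - τ b a) = b * a - a * b) ∧
    -- (LieT2): [x,y] − e([t x, t y]) + τ^Lie_{t x, t y} = τ^Lie_{s x, s y} − e([s y, s x]) + [y,x]
    (∀ x y : C₁,
      (x * y - y * x) - e (t x * t y - t y * t x) + (τ (t x) (t y) - τ (t y) (t x)) =
        (τ (s x) (s y) - τ (s y) (s x)) - e (s y * s x - s x * s y) + (y * x - x * y)) ∧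
    -- (LieB3): τ^Lie_{[a,b],c} = [τ^Lie_{a,c}, e b] + [e a, τ^Lie_{b,c}]
    (∀ a b c : C₀,
      τ (a * b - b * a) c - τ c (a * b - b * a) =
        ((τ a c - τ c a) * e b - e b * (τ a c - τ c a)) +
        (e a * (τ b c - τ c b) - (τ b c - τ c b) * e a)) ∧
    -- (LieB4): τ^Lie_{a,[b,c]} = [e b, τ^Lie_{a,c}] + [τ^Lie_{a,b}, e c]
    (∀ a b c : C₀,
      τ a (b * c - c * b) - τ (b * c - c * b) a =
        (e b * (τ a c - τ c a) - (τ a c - τ c a) * e b) +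
        ((τ a b - τ b a) * e c - e c * (τ a b - τ b a))) := by
  refine ⟨?_, ?_, ?_, ?_, ?_⟩
  · intro a b; rw [map_sub, hT1s, hT1s]
  · intro a b; rw [map_sub, hT1t, hT1t]
  · intro x y
    have h1 := hT2 x y
    have h2 := hT2 y x
    rw [map_sub, map_sub]
    calc (x * y - y * x) - (e (t x * t y) - e (t y * t x)) +
          (τ (t x) (t y) - τ (t y) (t x))
        = (x * y - e (t x * t y) + τ (t x) (t y)) -
            (y * x - e (t y * t x) + τ (t y) (t x)) := by abel
      _ = (τ (s x) (s y) - e (s y * s x) + y * x) -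
            (τ (s y) (s x) - e (s x * s y) + x * y) := by rw [h1, h2]
      _ = _ := by abel
  · intro a b c
    simp only [map_sub, LinearMap.sub_apply]
    rw [hT3 a b c, hT3 b a c, hT4 c a b, hT4 c b a]
    simp only [mul_assoc, mul_sub, sub_mul]
    abel
  · intro a b c
    simp only [map_sub, LinearMap.sub_apply]
    rw [hT4 a b c, hT4 a c b, hT3 b c a, hT3 c b a]
    simp only [mul_assoc, mul_sub, sub_mul]
    abel
end

section
/- Let K be a field with characteristic different from 2, let C₀, C₁ be Lie K-algebras, with Lie algebra homomorphisms s, t : C₁ → C₀ and e : C₀ → C₁ satisfying s ∘ e = id and t ∘ e = id, and let τ : C₀ × C₀ → C₁ be a K-bilinear map satisfying: (LieT1) s(τ_{a,b}) = ⁅a,b⁆ and t(τ_{a,b}) = ⁅b,a⁆ for all a, b ∈ C₀; (LieT2) ⁅x,y⁆ − e(⁅t(x),t(y)⁆) + τ_{t(x),t(y)} = τ_{s(x),s(y)} − e(⁅s(y),s(x)⁆) + ⁅y,x⁆ for all x, y ∈ C₁. Then for all a, b, c ∈ C₀: τ_{a,⁅b,c⁆} = ⁅e(a), τ_{b,c}⁆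 and τ_{⁅b,c⁆,a} = ⁅τ_{b,c}, e(a)⁆; in particular τ_{a,⁅b,c⁆} = −τ_{⁅b,c⁆,a}. -/
/-- In a categorical Lie `K`-algebra over a field of characteristic ≠ 2,
any `K`-bilinear `τ` satisfying (LieT1) and (LieT2) automatically satisfies
`τ_{a,⁅b,c⁆} = ⁅e a, τ_{b,c}⁆`, `τ_{⁅b,c⁆,a} = ⁅τ_{b,c}, e a⁆`, and in particular
`τ_{a,⁅b,c⁆} = −τ_{⁅b,c⁆,a}`. -/
theorem stmt_11 (K : Type*) [Field K] (hchar : (2 : K) ≠ 0)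
    (C₀ C₁ : Type*) [LieRing C₀] [LieAlgebra K C₀] [LieRing C₁] [LieAlgebra K C₁]
    (s t : C₁ →ₗ⁅K⁆ C₀) (e : C₀ →ₗ⁅K⁆ C₁)
    (hse : ∀ a, s (e a) = a) (hte : ∀ a, t (e a) = a)
    (τ : C₀ →ₗ[K] C₀ →ₗ[K] C₁)
    (hT1s : ∀ a b : C₀, s (τ a b) = ⁅a, b⁆)
    (hT1t : ∀ a b : C₀, t (τ a b) = ⁅b, a⁆)
    (hT2 : ∀ x y : C₁,
      ⁅x, y⁆ - e ⁅t x, t y⁆ + τ (t x) (t y) =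
        τ (s x) (s y) - e ⁅s y, s x⁆ + ⁅y, x⁆) :
    ∀ a b c : C₀,
      τ a ⁅b, c⁆ = ⁅e a, τ b c⁆ ∧
      τ ⁅b, c⁆ a = ⁅τ b c, e a⁆ ∧
      τ a ⁅b, c⁆ = -τ ⁅b, c⁆ a := by
  intro a b c
  have key : ∀ u v : C₁, u + u = v + v → u = v := by
    intro u v h
    have h2 : (2 : K) • u = (2 : K) • v := by rw [two_smul, two_smul]; exact h
    exact smul_right_injective C₁ hchar h2
  have e1 := hT2 (e a) (τ b c)
  have e2 := hT2 (τ b c) (e a)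
  have hcb : (⁅c, b⁆ : C₀) = -⁅b, c⁆ := (lie_skew c b).symm
  have hba : (⁅⁅b,c⁆, a⁆ : C₀) = -⁅a, ⁅b,c⁆⁆ := (lie_skew _ a).symm
  simp only [hse, hte, hT1s, hT1t, hcb, hba, map_neg, LinearMap.neg_apply, lie_neg, neg_lie,
    neg_neg, ← lie_skew (τ b c) (e a)] at e1 e2
  have h1 : τ a ⁅b, c⁆ = ⁅e a, τ b c⁆ :=
    key _ _ (by linear_combination (norm := abel) -e1)
  have h2 : τ ⁅b, c⁆ a = ⁅τ b c, e a⁆ := by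
    rw [← lie_skew (τ b c) (e a)]
    exact key _ _ (by linear_combination (norm := abel) -e2)
  refine ⟨h1, h2, ?_⟩
  rw [h1, h2, ← lie_skew (τ b c) (e a), neg_neg]
end

section
/- Let K be a field with characteristic different from 2, let C₀, C₁ be Lie K-algebras, with Lie algebra homomorphisms s, t : C₁ → C₀ and e : C₀ → C₁ satisfying s ∘ e = id and t ∘ e = id, and let τ : C₀ × C₀ → C₁ be a K-bilinear map satisfying (LieT1) s(τ_{a,b}) = ⁅a,b⁆, t(τ_{a,b}) = ⁅b,a⁆, and (LieT2) ⁅x,y⁆ − e(⁅t(x),t(y)⁆) + τ_{t(x),t(y)} = τ_{s(x),s(y)} − e(⁅s(y),s(x)⁆) + ⁅y,x⁆ for all x, y ∈ C₁. Then the following two pairs of conditions are equivalent: [(LieB3) τ_{⁅a,b⁆,c} = ⁅τ_{a,c}, e(b)⁆ + ⁅e(a), τ_{b,c}⁆ and (LieB4) τ_{a,⁅b,c⁆} = ⁅e(b), τ_{a,c}⁆ + ⁅τ_{a,b}, e(c)⁆ for all a, b, c ∈ C₀] if and only if [(LieT3) τ_{⁅a,b⁆,c} = τ_{a,⁅b,c⁆}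 − τ_{b,⁅a,c⁆} and (LieT4) τ_{a,⁅b,c⁆} = τ_{⁅a,b⁆,c} − τ_{⁅a,c⁆,b} for all a, b, c ∈ C₀]. -/
/-- In a categorical Lie `K`-algebra over a field of characteristic ≠ 2,
for a `K`-bilinear `τ` satisfying (LieT1) and (LieT2), the conditions (LieB3)–(LieB4)
(Ulualan's braiding) are equivalent to the conditions (LieT3)–(LieT4). -/
theorem stmt_12 (K : Type*) [Field K] (hchar : (2 : K) ≠ 0)
    (C₀ C₁ : Type*) [LieRing C₀] [LieAlgebra K C₀] [LieRing C₁] [LieAlgebra K C₁]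
    (s t : C₁ →ₗ⁅K⁆ C₀) (e : C₀ →ₗ⁅K⁆ C₁)
    (hse : ∀ a, s (e a) = a) (hte : ∀ a, t (e a) = a)
    (τ : C₀ →ₗ[K] C₀ →ₗ[K] C₁)
    (hT1s : ∀ a b : C₀, s (τ a b) = ⁅a, b⁆)
    (hT1t : ∀ a b : C₀, t (τ a b) = ⁅b, a⁆)
    (hT2 : ∀ x y : C₁,
      ⁅x, y⁆ - e ⁅t x, t y⁆ + τ (t x) (t y) =
        τ (s x) (s y) - e ⁅s y, s x⁆ + ⁅y, x⁆) :
    ((∀ a b c : C₀, τ ⁅a, b⁆ c = ⁅τ a c, e b⁆ + ⁅e a, τ b c⁆) ∧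
     (∀ a b c : C₀, τ a ⁅b, c⁆ = ⁅e b, τ a c⁆ + ⁅τ a b, e c⁆)) ↔
    ((∀ a b c : C₀, τ ⁅a, b⁆ c = τ a ⁅b, c⁆ - τ b ⁅a, c⁆) ∧
     (∀ a b c : C₀, τ a ⁅b, c⁆ = τ ⁅a, b⁆ c - τ ⁅a, c⁆ b)) := by
  have two_cancel : ∀ x y : C₁, x + x = y + y → x = y := by
    intro x y h
    have h2 : (2 : K) • x = (2 : K) • y := by rw [two_smul, two_smul]; exact h
    exact smul_right_injective C₁ hchar h2
  have key1 : ∀ a b c : C₀, ⁅τ a c, e b⁆ = τ ⁅a, c⁆ b := by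
    intro a b c
    have h := hT2 (τ a c) (e b)
    rw [hT1s, hT1t, hse, hte] at h
    have hca : τ ⁅c, a⁆ b = -(τ ⁅a, c⁆ b) := by
      rw [show (⁅c, a⁆ : C₀) = -⁅a, c⁆ from (lie_skew c a).symm, map_neg,
        LinearMap.neg_apply]
    have heq : e ⁅⁅c, a⁆, b⁆ = e ⁅b, ⁅a, c⁆⁆ := by
      congr 1
      rw [show (⁅c, a⁆ : C₀) = -⁅a, c⁆ from (lie_skew c a).symm, neg_lie]
      exact lie_skew b ⁅a, c⁆
    have hlie : ⁅e b, τ a c⁆ = -⁅τ a c, e b⁆ := (lie_skew (e b) (τ a c)).symm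
    rw [hca, heq, hlie] at h
    apply two_cancel
    rw [← sub_eq_zero] at h ⊢
    rw [← h]; abel
  have key2 : ∀ a b c : C₀, ⁅e b, τ a c⁆ = τ b ⁅a, c⁆ := by
    intro a b c
    have h := hT2 (e b) (τ a c)
    rw [hT1s, hT1t, hse, hte] at h
    have hca : τ b ⁅c, a⁆ = -(τ b ⁅a, c⁆) := by
      rw [show (⁅c, a⁆ : C₀) = -⁅a, c⁆ from (lie_skew c a).symm, map_neg]
    have heq : e ⁅b, ⁅c, a⁆⁆ = e ⁅⁅a, c⁆, b⁆ := by
      congr 1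
      rw [show (⁅c, a⁆ : C₀) = -⁅a, c⁆ from (lie_skew c a).symm, lie_neg]
      exact lie_skew ⁅a, c⁆ b
    have hlie : ⁅τ a c, e b⁆ = -⁅e b, τ a c⁆ := (lie_skew (τ a c) (e b)).symm
    rw [hca, heq, hlie] at h
    apply two_cancel
    rw [← sub_eq_zero] at h ⊢
    rw [← h]; abel
  have hA : ∀ a b c : C₀, τ ⁅a, c⁆ b = -(τ b ⁅a, c⁆) := by
    intro a b c
    rw [← key1 a b c, ← key2 a b c]
    exact (lie_skew (e b) (τ a c)) ▸ (neg_neg _).symm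
  have hRHS3 : ∀ a b c : C₀,
      ⁅τ a c, e b⁆ + ⁅e a, τ b c⁆ = τ a ⁅b, c⁆ - τ b ⁅a, c⁆ := by
    intro a b c
    rw [key1 a b c, key2 b a c, hA a b c]
    abel
  have hRHS4 : ∀ a b c : C₀,
      ⁅e b, τ a c⁆ + ⁅τ a b, e c⁆ = τ ⁅a, b⁆ c - τ ⁅a, c⁆ b := by
    intro a b c
    rw [key2 a b c, key1 a c b, hA a b c]
    abel
  constructor
  · rintro ⟨h3, h4⟩
    exact ⟨fun a b c => (h3 a b c).trans (hRHS3 a b c),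
      fun a b c => (h4 a b c).trans (hRHS4 a b c)⟩
  · rintro ⟨h3, h4⟩
    exact ⟨fun a b c => (h3 a b c).trans (hRHS3 a b c).symm,
      fun a b c => (h4 a b c).trans (hRHS4 a b c).symm⟩
end

section
/- Let K be a field with characteristic different from 2 and let (M, N, (*₁, *₂), ∂, {−,−}) be a braided crossed module of associative K-algebras. Define {n, n'}_L := ({n, n'} − {n', n})/2 and [n, m]_* := n *₁ m − m *₂ n. Then {−,−}_L is a braiding on the crossed module of Lie K-algebras (M^L, N^L, [−,−]_*, ∂), i.e., writing [x,y] = xy − yx for commutators in M and N: (BLie1) ∂({n,n'}_L) = [n,n']; (BLie2) {∂m, ∂m'}_L = [m,m']; (BLie3) {∂m, n}_L = −[n,m]_*; (BLie4) {n, ∂m}_L = [n,m]_*; (BLie5) {n, [n',n'']}_L = {[n,n'], n''}_L − {[n,n''], n'}_L; (BLie6) {[n,n'], n''}_L = {n, [n',n'']}_L − {n', [n,n'']}_L, for all m, m' ∈ M and n, n', n'' ∈ N. -/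
/-- If `char K ≠ 2` and `(M, N, (*₁,*₂), ∂, {−,−})` is a braided crossed
module of associative `K`-algebras, then `{n,n'}_L := ({n,n'} − {n',n})/2` is a braiding
on the crossed module of Lie `K`-algebras `(M^L, N^L, [−,−]_*, ∂)`, where
`[n,m]_* = n *₁ m − m *₂ n` and `[x,y] = xy − yx`. -/
theorem stmt_13 (K : Type*) [Field K] (hchar : (2 : K) ≠ 0) (M N : Type*)
    [NonUnitalRing M] [Module K M] [SMulCommClass K M M] [IsScalarTower K M M]
    [NonUnitalRing N] [Module K N] [SMulCommClass K N N] [IsScalarTower K N N]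
    (act1 : N →ₗ[K] M →ₗ[K] M) (act2 : M →ₗ[K] N →ₗ[K] M)
    (hAAs1 : ∀ (n : N) (m m' : M), act1 n (m * m') = act1 n m * m')
    (hAAs2 : ∀ (n n' : N) (m : M), act1 n (act2 m n') = act2 (act1 n m) n')
    (hAAs3 : ∀ (n n' : N) (m : M), act1 n (act1 n' m) = act1 (n * n') m)
    (hAAs4 : ∀ (n n' : N) (m : M), act2 m (n * n') = act2 (act2 m n) n')
    (hAAs5 : ∀ (n : N) (m m' : M), m * act1 n m' = act2 m n * m')
    (hAAs6 : ∀ (n : N) (m m' : M), m * act2 m' n = act2 (m * m') n)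
    (d : M →ₙₐ[K] N)
    (hXAs1a : ∀ (n : N) (m : M), d (act1 n m) = n * d m)
    (hXAs1b : ∀ (n : N) (m : M), d (act2 m n) = d m * n)
    (hXAs2a : ∀ m m' : M, act1 (d m) m' = m * m')
    (hXAs2b : ∀ m m' : M, act2 m (d m') = m * m')
    (br : N →ₗ[K] N →ₗ[K] M)
    (hBAs1 : ∀ n n' : N, d (br n n') = n * n' - n' * n)
    (hBAs2 : ∀ m m' : M, br (d m) (d m') = m * m' - m' * m)
    (hBAs3 : ∀ (m : M) (n : N), br (d m) n = -(act1 n m - act2 m n))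
    (hBAs4 : ∀ (m : M) (n : N), br n (d m) = act1 n m - act2 m n)
    (hBAs5 : ∀ n n' n'' : N, br n (n' * n'') = act1 n' (br n n'') + act2 (br n n') n'')
    (hBAs6 : ∀ n n' n'' : N, br (n * n') n'' = act1 n (br n' n'') + act2 (br n n'') n') :
    -- (BLie1): ∂ {n,n'}_L = [n,n']
    (∀ n n' : N, d ((2 : K)⁻¹ • (br n n' - br n' n)) = n * n' - n' * n) ∧
    -- (BLie2): {∂m, ∂m'}_L = [m,m']
    (∀ m m' : M, (2 : K)⁻¹ • (br (d m) (d m') - br (d m') (d m)) = m * m' - m' * m) ∧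
    -- (BLie3): {∂m, n}_L = −[n,m]_*
    (∀ (m : M) (n : N),
      (2 : K)⁻¹ • (br (d m) n - br n (d m)) = -(act1 n m - act2 m n)) ∧
    -- (BLie4): {n, ∂m}_L = [n,m]_*
    (∀ (m : M) (n : N),
      (2 : K)⁻¹ • (br n (d m) - br (d m) n) = act1 n m - act2 m n) ∧
    -- (BLie5): {n, [n',n'']}_L = {[n,n'], n''}_L − {[n,n''], n'}_L
    (∀ n n' n'' : N,
      (2 : K)⁻¹ • (br n (n' * n'' - n'' * n') - br (n' * n'' - n'' * n') n) =
        (2 : K)⁻¹ • (br (n * n' - n' * n) n'' - br n'' (n * n' - n' * n)) -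
        (2 : K)⁻¹ • (br (n * n'' - n'' * n) n' - br n' (n * n'' - n'' * n))) ∧
    -- (BLie6): {[n,n'], n''}_L = {n, [n',n'']}_L − {n', [n,n'']}_L
    (∀ n n' n'' : N,
      (2 : K)⁻¹ • (br (n * n' - n' * n) n'' - br n'' (n * n' - n' * n)) =
        (2 : K)⁻¹ • (br n (n' * n'' - n'' * n') - br (n' * n'' - n'' * n') n) -
        (2 : K)⁻¹ • (br n' (n * n'' - n'' * n) - br (n * n'' - n'' * n) n')) := by

  have h2 : (2 : K)⁻¹ * 2 = 1 := inv_mul_cancel₀ hchar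
  have half : ∀ x : M, (2 : K)⁻¹ • ((2 : K) • x) = x := by
    intro x; rw [smul_smul, h2, one_smul]
  -- {n, ∂m}_L-style and commutator-expansion helpers
  have Lcomm : ∀ a b c : N,
      br a (b * c - c * b) - br (b * c - c * b) a
        = (2 : K) • (act1 a (br b c) - act2 (br b c) a) := by
    intro a b c
    rw [← hBAs1 b c, hBAs4 (br b c) a, hBAs3 (br b c) a, two_smul]
    abel
  have key : ∀ n n' n'' : N,
      act1 n (br n' n'') - act2 (br n' n'') n
        = (act1 n' (br n n'') - act2 (br n n'') n')
          - (act1 n'' (br n n') - act2 (br n n') n'') := by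
    intro n n' n''
    calc act1 n (br n' n'') - act2 (br n' n'') n
        = br n (d (br n' n'')) := (hBAs4 (br n' n'') n).symm
      _ = br n (n' * n'' - n'' * n') := by rw [hBAs1]
      _ = br n (n' * n'') - br n (n'' * n') := map_sub _ _ _
      _ = _ := by rw [hBAs5 n n' n'', hBAs5 n n'' n']; abel
  refine ⟨?_, ?_, ?_, ?_, ?_, ?_⟩
  · intro n n'
    rw [map_smul, map_sub, hBAs1, hBAs1]
    have : (n * n' - n' * n) - (n' * n - n * n') = (2 : K) • (n * n' - n' * n) := by
      rw [two_smul]; abel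
    rw [this, smul_smul, h2, one_smul]
  · intro m m'
    rw [hBAs2, hBAs2]
    have : (m * m' - m' * m) - (m' * m - m * m') = (2 : K) • (m * m' - m' * m) := by
      rw [two_smul]; abel
    rw [this, smul_smul, h2, one_smul]
  · intro m n
    rw [hBAs3, hBAs4]
    have : -(act1 n m - act2 m n) - (act1 n m - act2 m n)
        = (2 : K) • (-(act1 n m - act2 m n)) := by rw [two_smul]; abel
    rw [this, smul_smul, h2, one_smul]
  · intro m n
    rw [hBAs3, hBAs4]
    have : (act1 n m - act2 m n) - -(act1 n m - act2 m n)
        = (2 : K) • (act1 n m - act2 m n) := by rw [two_smul]; abel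
    rw [this, smul_smul, h2, one_smul]
  · intro n n' n''
    rw [← smul_sub]
    congr 1
    calc br n (n' * n'' - n'' * n') - br (n' * n'' - n'' * n') n
        = (2 : K) • (act1 n (br n' n'') - act2 (br n' n'') n) := Lcomm n n' n''
      _ = (2 : K) • ((act1 n' (br n n'') - act2 (br n n'') n')
            - (act1 n'' (br n n') - act2 (br n n') n'')) := by rw [key n n' n'']
      _ = _ := by
          rw [smul_sub, ← Lcomm n' n n'', ← Lcomm n'' n n']
          abel
  · intro n n' n''
    rw [← smul_sub]
    congr 1
    calc br (n * n' - n' * n) n'' - br n'' (n * n' - n' * n)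
        = -(br n'' (n * n' - n' * n) - br (n * n' - n' * n) n'') := by abel
      _ = -((2 : K) • (act1 n'' (br n n') - act2 (br n n') n'')) := by
          rw [Lcomm n'' n n']
      _ = (2 : K) • ((act1 n' (br n n'') - act2 (br n n'') n')
            - (act1 n'' (br n n') - act2 (br n n') n''))
          - (2 : K) • (act1 n' (br n n'') - act2 (br n n'') n') := by
          module
      _ = _ := by
          rw [← key n n' n'', ← Lcomm n n' n'', ← Lcomm n' n n'']
end
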